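/- Let p₁ = [0:1], p₂ = [1:1], p₃ = [2:1], p₄ = [3:1], p₅ = [6:1] in ℙ¹(ℚ), and let Γ_P be the subgroup of PGL₂(ℚ) generated by all elements g such that for some pairwise distinct indices i, j, k, l ∈ {1,…,5} one has g(p_i) = p_j, g(p_j) = p_i, g(p_k) = p_l, and g(p_l) = p_k. Then Γ_P contains both σ (the class of the matrix with rows (1,1),(0,1), acting as z ↦ z+1) and τ (the class of the matrix with rows (3,0),(0,1), acting as z ↦ 3z). -/

import Mathlib

/-!
For four distinct points `a, b, c, d` of `ℙ¹` there is an explicit Möbius involution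
`s(a b | c d)` exchanging `a ↔ b` and `c ↔ d`, given by a trace-zero matrix. A Möbius
transformation is determined by the images of three points, and chasing `0, 1, 2` through such
involutions of `P` gives, as matrix identities up to the scalars `144` and `-60`,
`σ = s(0 1 | 2 3) ∘ s(0 2 | 3 6) ∘ s(0 2 | 1 6)` and
`τ = s(0 1 | 3 6) ∘ s(1 3 | 2 6) ∘ s(0 3 | 1 2)`.
-/

open Matrix

noncomputable section

/-- The projective line `ℙ¹(K)` over a field `K`, as the projectivization of `K²`. -/
abbrev P1 (K : Type*) [Field K] : Type _ := Projectivization K (Fin 2 → K)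

/-- `PGL₂(K)`: the quotient of `GL₂(K)` by its center. -/
abbrev PGL2 (K : Type*) [Field K] : Type _ :=
  GL (Fin 2) K ⧸ Subgroup.center (GL (Fin 2) K)

namespace PGL2

variable {K : Type*} [Field K]

/-- The linear automorphism of `K²` attached to an element of `GL₂(K)`. -/
def glEquiv (g : GL (Fin 2) K) : (Fin 2 → K) ≃ₗ[K] (Fin 2 → K) :=
  (Matrix.GeneralLinearGroup.toLin g).toLinearEquiv

lemma glEquiv_apply (g : GL (Fin 2) K) (v : Fin 2 → K) :
    glEquiv g v = (g : Matrix (Fin 2) (Fin 2) K).mulVec v := rfl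

/-- `GL₂(K)` acts on `ℙ¹(K)` by Möbius transformations. -/
instance : SMul (GL (Fin 2) K) (P1 K) :=
  ⟨fun g => Projectivization.map (glEquiv g).toLinearMap (glEquiv g).injective⟩

lemma gl_smul_mk (g : GL (Fin 2) K) (v : Fin 2 → K) (hv : v ≠ 0) :
    g • Projectivization.mk K v hv
      = Projectivization.mk K ((g : Matrix (Fin 2) (Fin 2) K).mulVec v)
          (fun h => hv ((glEquiv g).injective (by rw [glEquiv_apply, h, map_zero]))) :=
  Projectivization.map_mk (glEquiv g).toLinearMap (glEquiv g).injective v hv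

instance : MulAction (GL (Fin 2) K) (P1 K) where
  one_smul x := by
    induction x using Projectivization.ind with
    | h v hv => rw [gl_smul_mk]; simp
  mul_smul g h x := by
    induction x using Projectivization.ind with
    | h v hv => rw [gl_smul_mk, gl_smul_mk, gl_smul_mk]; simp only [Units.val_mul, Matrix.mulVec_mulVec]

lemma exists_scalar_of_mem_center (g : GL (Fin 2) K)
    (hg : g ∈ Subgroup.center (GL (Fin 2) K)) :
    ∃ a : K, (g : Matrix (Fin 2) (Fin 2) K) = a • (1 : Matrix (Fin 2) (Fin 2) K) := by
  have hmem := Subgroup.mem_center_iff.mp hg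
  set A : Matrix (Fin 2) (Fin 2) K := (g : Matrix (Fin 2) (Fin 2) K) with hA
  have hUdet : ((!![1, 1; 0, 1] : Matrix (Fin 2) (Fin 2) K)).det ≠ 0 := by
    norm_num [Matrix.det_fin_two_of]
  have hLdet : ((!![1, 0; 1, 1] : Matrix (Fin 2) (Fin 2) K)).det ≠ 0 := by
    norm_num [Matrix.det_fin_two_of]
  have hU := congrArg Units.val (hmem (Matrix.GeneralLinearGroup.mkOfDetNeZero _ hUdet))
  have hL := congrArg Units.val (hmem (Matrix.GeneralLinearGroup.mkOfDetNeZero _ hLdet))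
  have hU' : (!![1, 1; 0, 1] : Matrix (Fin 2) (Fin 2) K) * A = A * !![1, 1; 0, 1] := hU
  have hL' : (!![1, 0; 1, 1] : Matrix (Fin 2) (Fin 2) K) * A = A * !![1, 0; 1, 1] := hL
  have e1 := congrFun (congrFun hU' 0) 0
  have e2 := congrFun (congrFun hU' 0) 1
  have e3 := congrFun (congrFun hL' 0) 0
  simp [Matrix.mul_apply, Fin.sum_univ_two] at e1 e2 e3
  refine ⟨A 0 0, ?_⟩
  ext i j
  fin_cases i <;> fin_cases j <;>
    simp [Matrix.one_apply] <;> first | exact e3 | exact e1 | linear_combination e2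



lemma center_smul_eq (g : GL (Fin 2) K) (hg : g ∈ Subgroup.center (GL (Fin 2) K))
    (x : P1 K) : g • x = x := by
  obtain ⟨a, hA⟩ := exists_scalar_of_mem_center g hg
  have ha : a ≠ 0 := by
    intro h
    subst h
    have : IsUnit (g : Matrix (Fin 2) (Fin 2) K).det := ⟨Matrix.GeneralLinearGroup.det g, rfl⟩
    rw [hA] at this
    simp at this
  induction x using Projectivization.ind with
  | h v hv =>
    rw [gl_smul_mk]
    rw [Projectivization.mk_eq_mk_iff]
    exact ⟨Units.mk0 a ha, by simp [hA]; ext i; fin_cases i <;> simp⟩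

/-- `PGL₂(K)` acts on `ℙ¹(K)` by Möbius transformations. -/
def toPerm : PGL2 K →* Equiv.Perm (P1 K) :=
  QuotientGroup.lift _ (MulAction.toPermHom (GL (Fin 2) K) (P1 K))
    (fun g hg => Equiv.ext fun x => center_smul_eq g hg x)

instance : SMul (PGL2 K) (P1 K) := ⟨fun g x => toPerm g x⟩

lemma smul_def (g : PGL2 K) (x : P1 K) : g • x = toPerm g x := rfl

instance : MulAction (PGL2 K) (P1 K) where
  one_smul x := by simp [smul_def]
  mul_smul g h x := by simp [smul_def]

/-- The class in `PGL₂(K)` of a matrix with nonzero determinant. -/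
def cls (M : Matrix (Fin 2) (Fin 2) K) (h : M.det ≠ 0) : PGL2 K :=
  QuotientGroup.mk (Matrix.GeneralLinearGroup.mkOfDetNeZero M h)

lemma cls_smul_mk (M : Matrix (Fin 2) (Fin 2) K) (h : M.det ≠ 0) (v : Fin 2 → K)
    (hv : v ≠ 0) (hMv : M.mulVec v ≠ 0) :
    cls M h • Projectivization.mk K v hv = Projectivization.mk K (M.mulVec v) hMv := by
  rw [smul_def, cls]
  show (Matrix.GeneralLinearGroup.mkOfDetNeZero M h) • Projectivization.mk K v hv = _
  rw [gl_smul_mk]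
  rfl

lemma vec_ne_zero (a : K) : ![a, (1 : K)] ≠ 0 := fun h => by simpa using congrFun h 1

/-- The affine point `[z : 1]` of `ℙ¹(K)`. -/
def affPt (z : K) : P1 K := Projectivization.mk K ![z, 1] (vec_ne_zero z)

/-- The point `[a : b]` of `ℙ¹(K)`. -/
def pt (a b : K) (h : ![a, b] ≠ 0) : P1 K := Projectivization.mk K ![a, b] h

end PGL2


open PGL2

/-- The configuration `P = (0, 1, 2, 3, 6)` in `ℙ¹(ℚ)`. -/
noncomputable def pconf : Fin 5 → P1 ℚ :=
  ![affPt 0, affPt 1, affPt 2, affPt 3, affPt 6]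

/-- `Γ_P`: the subgroup of `PGL₂(ℚ)` generated by the involutions exchanging two
disjoint pairs of points of the configuration `P`. -/
noncomputable def GammaP : Subgroup (PGL2 ℚ) :=
  Subgroup.closure {g : PGL2 ℚ | ∃ i j k l : Fin 5,
    i ≠ j ∧ i ≠ k ∧ i ≠ l ∧ j ≠ k ∧ j ≠ l ∧ k ≠ l ∧
    g • pconf i = pconf j ∧ g • pconf j = pconf i ∧
    g • pconf k = pconf l ∧ g • pconf l = pconf k}

namespace PGL2

variable {K : Type*} [Field K]

lemma cls_mul {M N : Matrix (Fin 2) (Fin 2) K} (hM : M.det ≠ 0) (hN : N.det ≠ 0) :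
    cls M hM * cls N hN = cls (M * N) (by simp [Matrix.det_mul, hM, hN]) := by
  rw [cls, cls, cls, ← QuotientGroup.mk_mul]
  congr 1
  exact Units.ext rfl

lemma cls_eq_cls_of_eq_smul {M N : Matrix (Fin 2) (Fin 2) K} (hM : M.det ≠ 0) (hN : N.det ≠ 0)
    {a : K} (h : M = a • N) : cls M hM = cls N hN := by
  have ha : a ≠ 0 := by rintro rfl; simp [h] at hM
  have hscalar : GeneralLinearGroup.mkOfDetNeZero M hM = GeneralLinearGroup.scalar (Fin 2)
      (Units.mk0 a ha) * GeneralLinearGroup.mkOfDetNeZero N hN := by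
    ext i j
    simp [h, GeneralLinearGroup.mkOfDetNeZero]
  have hcenter :
      GeneralLinearGroup.scalar (Fin 2) (Units.mk0 a ha) ∈ Subgroup.center (GL (Fin 2) K) := by
    rw [GeneralLinearGroup.center_eq_range_scalar]
    exact ⟨_, rfl⟩
  rw [cls, cls, hscalar, QuotientGroup.mk_mul, (QuotientGroup.eq_one_iff _).mpr hcenter, one_mul]

lemma cls_smul_affPt {M : Matrix (Fin 2) (Fin 2) K} (h : M.det ≠ 0) {z w : K}
    (hden : M 1 0 * z + M 1 1 ≠ 0) (hnum : M 0 0 * z + M 0 1 = w * (M 1 0 * z + M 1 1)) :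
    cls M h • affPt z = affPt w := by
  have hMv : M.mulVec ![z, 1] = (M 1 0 * z + M 1 1) • ![w, 1] := by
    ext i
    fin_cases i
    · simp only [mulVec, dotProduct, Fin.zero_eta, Fin.sum_univ_two, cons_val_zero,
        cons_val_one, cons_val_fin_one, mul_one, Pi.smul_apply, smul_eq_mul]
      linear_combination hnum
    · simp [Matrix.mulVec, dotProduct, Fin.sum_univ_two]
  have hMv0 : M.mulVec ![z, 1] ≠ 0 := by rw [hMv]; exact smul_ne_zero hden (vec_ne_zero w)
  rw [affPt, cls_smul_mk M h _ _ hMv0, affPt, Projectivization.mk_eq_mk_iff]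
  exact ⟨Units.mk0 _ hden, hMv.symm⟩

/-- The trace-zero matrix `!![A, B; C, -A]` of the Möbius involution exchanging `a ↔ b` and
`c ↔ d`: `(A, B, C)` is the cross product of `(a + b, 1, -a * b)` and `(c + d, 1, -c * d)`, which
makes `z ↦ (A z + B) / (C z - A)` send `a` to `b` and `c` to `d`. -/
def doubleSwapMatrix (a b c d : K) : Matrix (Fin 2) (Fin 2) K :=
  !![a * b - c * d, a * c * d + b * c * d - a * b * c - a * b * d; a + b - c - d, c * d - a * b]

lemma det_doubleSwapMatrix (a b c d : K) :
    (doubleSwapMatrix a b c d).det = -((a - c) * (a - d) * (b - c) * (b - d)) := by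
  rw [doubleSwapMatrix, Matrix.det_fin_two_of]; ring

lemma doubleSwapMatrix_comm (a b c d : K) :
    doubleSwapMatrix b a c d = doubleSwapMatrix a b c d := by
  ext i j; fin_cases i <;> fin_cases j <;> simp [doubleSwapMatrix] <;> ring

lemma doubleSwapMatrix_swap_pairs (a b c d : K) :
    doubleSwapMatrix c d a b = (-1 : K) • doubleSwapMatrix a b c d := by
  ext i j; fin_cases i <;> fin_cases j <;> simp [doubleSwapMatrix] <;> ring

lemma cls_doubleSwapMatrix_smul_affPt_fst {a b c d : K}
    (h : (doubleSwapMatrix a b c d).det ≠ 0) :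
    cls (doubleSwapMatrix a b c d) h • affPt a = affPt b := by
  have hden : (a - c) * (a - d) ≠ 0 := fun h0 =>
    h (by rw [det_doubleSwapMatrix]; linear_combination -(b - c) * (b - d) * h0)
  apply cls_smul_affPt <;> simp only [doubleSwapMatrix, Matrix.of_apply, Matrix.cons_val',
    Matrix.cons_val_zero, Matrix.cons_val_one, Matrix.empty_val', Matrix.cons_val_fin_one]
  · convert hden using 1; ring
  · ring

lemma cls_doubleSwapMatrix_smul_affPt {a b c d : K} (h : (doubleSwapMatrix a b c d).det ≠ 0) :
    cls (doubleSwapMatrix a b c d) h • affPt a = affPt b ∧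
      cls (doubleSwapMatrix a b c d) h • affPt b = affPt a ∧
      cls (doubleSwapMatrix a b c d) h • affPt c = affPt d ∧
      cls (doubleSwapMatrix a b c d) h • affPt d = affPt c := by
  have hba : (doubleSwapMatrix b a c d).det ≠ 0 := by rwa [doubleSwapMatrix_comm]
  have hcd : (doubleSwapMatrix c d a b).det ≠ 0 := by
    rw [det_doubleSwapMatrix] at h ⊢; convert h using 1; ring
  have hdc : (doubleSwapMatrix d c a b).det ≠ 0 := by rwa [doubleSwapMatrix_comm]
  have e_ba : cls (doubleSwapMatrix a b c d) h = cls (doubleSwapMatrix b a c d) hba :=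
    cls_eq_cls_of_eq_smul h hba (a := 1) (by rw [one_smul, doubleSwapMatrix_comm])
  have e_cd : cls (doubleSwapMatrix a b c d) h = cls (doubleSwapMatrix c d a b) hcd :=
    cls_eq_cls_of_eq_smul h hcd (a := -1) (doubleSwapMatrix_swap_pairs c d a b)
  have e_dc : cls (doubleSwapMatrix a b c d) h = cls (doubleSwapMatrix d c a b) hdc :=
    e_cd.trans (cls_eq_cls_of_eq_smul hcd hdc (a := 1) (by rw [one_smul, doubleSwapMatrix_comm]))
  exact ⟨cls_doubleSwapMatrix_smul_affPt_fst h,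
    e_ba ▸ cls_doubleSwapMatrix_smul_affPt_fst hba,
    e_cd ▸ cls_doubleSwapMatrix_smul_affPt_fst hcd,
    e_dc ▸ cls_doubleSwapMatrix_smul_affPt_fst hdc⟩

lemma det_doubleSwapMatrix_ne_zero {a b c d : K} (hac : a ≠ c) (had : a ≠ d) (hbc : b ≠ c)
    (hbd : b ≠ d) : (doubleSwapMatrix a b c d).det ≠ 0 := by
  rw [det_doubleSwapMatrix, neg_ne_zero]
  exact mul_ne_zero (mul_ne_zero (mul_ne_zero (sub_ne_zero.2 hac) (sub_ne_zero.2 had))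
    (sub_ne_zero.2 hbc)) (sub_ne_zero.2 hbd)

lemma cls_mul_mem {H : Subgroup (PGL2 K)} {M N : Matrix (Fin 2) (Fin 2) K} {hM : M.det ≠ 0}
    {hN : N.det ≠ 0} (hMH : cls M hM ∈ H) (hNH : cls N hN ∈ H) :
    cls (M * N) (by simp [Matrix.det_mul, hM, hN]) ∈ H :=
  cls_mul hM hN ▸ H.mul_mem hMH hNH

end PGL2

def pconfCoord : Fin 5 → ℚ := ![0, 1, 2, 3, 6]

lemma pconf_eq_affPt (i : Fin 5) : pconf i = affPt (pconfCoord i) := by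
  fin_cases i <;> rfl

lemma pconfCoord_injective : Function.Injective pconfCoord := by
  decide

lemma det_doubleSwapMatrix_pconfCoord_ne_zero {i j k l : Fin 5} (h : [i, j, k, l].Nodup) :
    (doubleSwapMatrix (pconfCoord i) (pconfCoord j) (pconfCoord k) (pconfCoord l)).det ≠ 0 := by
  simp only [List.nodup_cons, List.mem_cons, List.not_mem_nil] at h
  exact det_doubleSwapMatrix_ne_zero (pconfCoord_injective.ne (by tauto))
    (pconfCoord_injective.ne (by tauto)) (pconfCoord_injective.ne (by tauto))
    (pconfCoord_injective.ne (by tauto))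

lemma cls_doubleSwapMatrix_mem_GammaP (i j k l : Fin 5) (h : [i, j, k, l].Nodup) :
    cls (doubleSwapMatrix (pconfCoord i) (pconfCoord j) (pconfCoord k) (pconfCoord l))
      (det_doubleSwapMatrix_pconfCoord_ne_zero h) ∈ GammaP := by
  simp only [List.nodup_cons, List.mem_cons, List.not_mem_nil] at h
  apply Subgroup.subset_closure
  refine ⟨i, j, k, l, by tauto, by tauto, by tauto, by tauto, by tauto, by tauto, ?_⟩
  simp only [pconf_eq_affPt]
  exact cls_doubleSwapMatrix_smul_affPt _

/-- `Γ_P` contains the Möbius transformations `σ : z ↦ z + 1` and `τ : z ↦ 3z`. -/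
theorem sigma_tau_mem_GammaP :
    cls !![(1 : ℚ), 1; 0, 1] (by norm_num [Matrix.det_fin_two_of]) ∈ GammaP ∧
      cls !![(3 : ℚ), 0; 0, 1] (by norm_num [Matrix.det_fin_two_of]) ∈ GammaP := by
  have hσ := cls_mul_mem (cls_mul_mem (cls_doubleSwapMatrix_mem_GammaP 0 1 2 3 (by decide))
    (cls_doubleSwapMatrix_mem_GammaP 0 2 3 4 (by decide)))
    (cls_doubleSwapMatrix_mem_GammaP 0 2 1 4 (by decide))
  have hτ := cls_mul_mem (cls_mul_mem (cls_doubleSwapMatrix_mem_GammaP 0 1 3 4 (by decide))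
    (cls_doubleSwapMatrix_mem_GammaP 1 3 2 4 (by decide)))
    (cls_doubleSwapMatrix_mem_GammaP 0 3 1 2 (by decide))
  constructor
  · convert hσ using 1
    refine (cls_eq_cls_of_eq_smul _ _ (a := (144 : ℚ)) ?_).symm
    simp only [doubleSwapMatrix, pconfCoord, Matrix.cons_val]
    norm_num [Matrix.mul_fin_two]
  · convert hτ using 1
    refine (cls_eq_cls_of_eq_smul _ _ (a := (-60 : ℚ)) ?_).symm
    simp only [doubleSwapMatrix, pconfCoord, Matrix.cons_val]
    norm_num [Matrix.mul_fin_two]
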